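/- Two-state donation game solution: let 0 < b < B, 0 < c < B − b, and c/(B−b) < λ < 1. Consider the multi-state game with states S = {H, L}, action sets X_s = Y_s = {0,1} in both states, transitions T(x,y;s) = H if (x,y) = (1,1) and T(x,y;s) = L otherwise (for both s), and utilities U(x,y;H) = B·x − c·y and U(x,y;L) = b·x − c·y. Then the functions m(H) = m(L) = 0 and M(L) = b, M(H) = λ·b + (1−λ)·B satisfy the fixed point equations m(s) = min_{x∈{0,1}} max_{y∈{0,1}} (λ·m(T(x,y;s)) + (1−λ)·U(x,y;s)) and M(s) = max_{x∈{0,1}} min_{y∈{0,1}} (λ·M(T(x,y;s)) + (1−λ)·U(x,y;s)) for s ∈ {H, L}. -/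

import Mathlib

open Filter Topology

/-- The Bellman min–max operator: `F(m)(s) = min_x max_y (λ·m(T(x,y;s)) + (1−λ)·U(x,y;s))`,
where `(1−λ)·U` is the rescaled utility `U_λ`. -/
noncomputable def bellmanMinMax {S : Type*} (X Y : S → Type*)
    [∀ s, Fintype (X s)] [∀ s, Nonempty (X s)]
    [∀ s, Fintype (Y s)] [∀ s, Nonempty (Y s)]
    (T : ∀ s, X s → Y s → S) (U : ∀ s, X s → Y s → ℝ) (lam : ℝ)
    (m : S → ℝ) (s : S) : ℝ :=
  Finset.univ.inf' Finset.univ_nonempty fun x : X s =>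
    Finset.univ.sup' Finset.univ_nonempty fun y : Y s =>
      lam * m (T s x y) + (1 - lam) * U s x y

/-- The Bellman max–min operator: `G(M)(s) = max_x min_y (λ·M(T(x,y;s)) + (1−λ)·U(x,y;s))`. -/
noncomputable def bellmanMaxMin {S : Type*} (X Y : S → Type*)
    [∀ s, Fintype (X s)] [∀ s, Nonempty (X s)]
    [∀ s, Fintype (Y s)] [∀ s, Nonempty (Y s)]
    (T : ∀ s, X s → Y s → S) (U : ∀ s, X s → Y s → ℝ) (lam : ℝ)
    (M : S → ℝ) (s : S) : ℝ :=
  Finset.univ.sup' Finset.univ_nonempty fun x : X s =>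
    Finset.univ.inf' Finset.univ_nonempty fun y : Y s =>
      lam * M (T s x y) + (1 - lam) * U s x y

/-- `m₀`, the minimum of the utility over all state–action triples. -/
noncomputable def utilMin {S : Type*} [Fintype S] [Nonempty S] (X Y : S → Type*)
    [∀ s, Fintype (X s)] [∀ s, Nonempty (X s)]
    [∀ s, Fintype (Y s)] [∀ s, Nonempty (Y s)]
    (U : ∀ s, X s → Y s → ℝ) : ℝ :=
  haveI : Nonempty ((s : S) × X s × Y s) :=
    ⟨⟨Classical.arbitrary S, Classical.arbitrary _, Classical.arbitrary _⟩⟩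
  Finset.univ.inf' Finset.univ_nonempty fun p : Σ s : S, X s × Y s => U p.1 p.2.1 p.2.2

/-- `M₀`, the maximum of the utility over all state–action triples. -/
noncomputable def utilMax {S : Type*} [Fintype S] [Nonempty S] (X Y : S → Type*)
    [∀ s, Fintype (X s)] [∀ s, Nonempty (X s)]
    [∀ s, Fintype (Y s)] [∀ s, Nonempty (Y s)]
    (U : ∀ s, X s → Y s → ℝ) : ℝ :=
  haveI : Nonempty ((s : S) × X s × Y s) :=
    ⟨⟨Classical.arbitrary S, Classical.arbitrary _, Classical.arbitrary _⟩⟩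
  Finset.univ.sup' Finset.univ_nonempty fun p : Σ s : S, X s × Y s => U p.1 p.2.1 p.2.2

/-- The two states of the donation game: `H` (high benefit) and `L` (low benefit). -/
inductive DState where
  | H : DState
  | L : DState
deriving DecidableEq

instance : Fintype DState := ⟨{DState.H, DState.L}, fun x => by cases x <;> simp⟩

instance : Nonempty DState := ⟨DState.H⟩

/-!
Write `β(s)` for the benefit in state `s`. For `m ≡ 0` the minimizing autocrat defects, after
which the opponent's best reply is worth `0`, whereas cooperating would give the opponent
`(1 − λ)·β(s) ≥ 0`. For `M` the maximizing autocrat cooperates: the opponent's cooperation costs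
`(1 − λ)·c` now but lifts the continuation from `M(L)` to `M(H)`, a gain of `λ(1 − λ)(B − b)`,
so as `c < λ(B − b)` the minimum over the opponent's replies is attained by defection and equals
`λ·b + (1 − λ)·β(s) = M(s)`, more than the at most `λ·b` left after the autocrat defects.
-/

theorem Finset.univ_sup'_fin_two {α : Type*} [SemilatticeSup α] (f : Fin 2 → α) :
    Finset.univ.sup' Finset.univ_nonempty f = f 0 ⊔ f 1 := by
  simp [Fin.univ_succ]

theorem Finset.univ_inf'_fin_two {α : Type*} [SemilatticeInf α] (f : Fin 2 → α) :
    Finset.univ.inf' Finset.univ_nonempty f = f 0 ⊓ f 1 := by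
  simp [Fin.univ_succ]

section DonationGame

variable {c lam : ℝ}

theorem isFixedPt_bellmanMinMax_zero {S : Type*} (T : S → Fin 2 → Fin 2 → S) {β : S → ℝ}
    (hβ : ∀ s, 0 ≤ β s) (hc : 0 ≤ c) (hlam : lam ≤ 1) :
    Function.IsFixedPt
      (bellmanMinMax (fun _ => Fin 2) (fun _ => Fin 2) T (fun s x y => β s * x - c * y) lam)
      0 := by
  funext s
  have hcost : (1 - lam) * -c ≤ 0 :=
    mul_nonpos_of_nonneg_of_nonpos (sub_nonneg.mpr hlam) (neg_nonpos.mpr hc)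
  have hbenefit : 0 ≤ (1 - lam) * β s := mul_nonneg (sub_nonneg.mpr hlam) (hβ s)
  simp only [bellmanMinMax, Finset.univ_sup'_fin_two, Finset.univ_inf'_fin_two, Pi.zero_apply,
    Fin.val_zero, Fin.val_one, Nat.cast_zero, Nat.cast_one, mul_zero, mul_one, sub_zero,
    zero_sub, zero_add]
  rw [max_eq_left hcost, min_eq_left (le_max_of_le_left hbenefit)]

def donationTransition (_ : DState) (x y : Fin 2) : DState :=
  if x = 1 ∧ y = 1 then DState.H else DState.L

theorem isFixedPt_bellmanMaxMin_donation {β M : DState → ℝ}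
    (hβ : ∀ s, 0 ≤ β s) (hc : c ≤ lam * (β DState.H - β DState.L)) (hlam : lam ≤ 1)
    (hMH : M DState.H = lam * β DState.L + (1 - lam) * β DState.H) (hML : M DState.L = β DState.L) :
    Function.IsFixedPt
      (bellmanMaxMin (fun _ => Fin 2) (fun _ => Fin 2) donationTransition
        (fun s x y => β s * x - c * y) lam) M := by
  funext s
  have hvalue : M s = lam * β DState.L + (1 - lam) * β s := by
    cases s
    · exact hMH
    · rw [hML]; ring
  have hdefect : lam * β DState.L ≤ lam * β DState.L + (1 - lam) * β s :=
    le_add_of_nonneg_right (mul_nonneg (sub_nonneg.mpr hlam) (hβ s))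
  have hcooperate : lam * β DState.L + (1 - lam) * β s ≤
      lam * (lam * β DState.L + (1 - lam) * β DState.H) + (1 - lam) * (β s - c) := by
    linear_combination mul_nonneg (sub_nonneg.mpr hlam) (sub_nonneg.mpr hc)
  rw [hvalue]
  simp only [bellmanMaxMin, Finset.univ_sup'_fin_two, Finset.univ_inf'_fin_two,
    donationTransition, hMH, hML, Fin.val_zero, Fin.val_one, Nat.cast_zero,
    Nat.cast_one, mul_zero, mul_one, sub_zero, zero_sub, add_zero, zero_ne_one, false_and,
    and_false, and_self, if_true, if_false]
  rw [min_eq_left hcooperate, max_eq_right ((min_le_left _ _).trans hdefect)]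

end DonationGame

theorem two_state_donation_game_solution
    (b B c lam : ℝ)
    (hb : 0 < b) (hbB : b < B) (hc : 0 < c)
    (hlam1 : c / (B - b) < lam) (hlam2 : lam < 1) :
    (∀ s : DState,
      (fun _ : DState => (0 : ℝ)) s =
        bellmanMinMax (fun _ : DState => Fin 2) (fun _ : DState => Fin 2)
          (fun _ x y => if x = 1 ∧ y = 1 then DState.H else DState.L)
          (fun s x y => (match s with | DState.H => B | DState.L => b) * (x.val : ℝ)
            - c * (y.val : ℝ))
          lam (fun _ : DState => (0 : ℝ)) s) ∧
    (∀ s : DState,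
      (fun s : DState => match s with
        | DState.H => lam * b + (1 - lam) * B
        | DState.L => b) s =
        bellmanMaxMin (fun _ : DState => Fin 2) (fun _ : DState => Fin 2)
          (fun _ x y => if x = 1 ∧ y = 1 then DState.H else DState.L)
          (fun s x y => (match s with | DState.H => B | DState.L => b) * (x.val : ℝ)
            - c * (y.val : ℝ))
          lam (fun s : DState => match s with
            | DState.H => lam * b + (1 - lam) * B
            | DState.L => b) s) := by
  let β : DState → ℝ := fun s => match s with | DState.H => B | DState.L => b
  have hβ : ∀ s, 0 ≤ β s := by rintro (_ | _) <;> simp only [β] <;> linarith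
  have hcoop : c ≤ lam * (B - b) := ((div_lt_iff₀ (sub_pos.mpr hbB)).mp hlam1).le
  have hlower := isFixedPt_bellmanMinMax_zero donationTransition hβ hc.le hlam2.le
  have hupper := isFixedPt_bellmanMaxMin_donation
    (M := fun s => match s with | DState.H => lam * b + (1 - lam) * B | DState.L => b)
    hβ hcoop hlam2.le rfl rfl
  exact ⟨fun s => (congrFun hlower s).symm, fun s => (congrFun hupper s).symm⟩
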